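/- arXiv:1912.12004 — 8 statements merged into one kernel-verified Lean document; each statement's English description precedes it below -/
import Mathlib

section
/- Let φ = f + Ψ with f convex differentiable and Ψ proper lsc convex, L > 0, and suppose y ∈ E satisfies φ(T_L(y)) ≤ m_L(y; T_L(y)), where m_L(y;x) = f(y) + ⟨∇f(y), x-y⟩ + (L/2)‖x-y‖² + Ψ(x). Then (1/(2L))·‖g_L(y)‖² ≤ φ(y) - φ(T_L(y)) ≤ φ(y) - φ*, where φ* = inf φ and g_L(y) = L(y - T_L(y)). -/
open Real RealInnerProductSpace

theorem stmt4 {E : Type*} [NormedAddCommGroup E] [InnerProductSpace ℝ E]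
    [FiniteDimensional ℝ E]
    (f : E → ℝ) (f' : E → E) (Ψ : E → ℝ) (L : ℝ) (hL : 0 < L)
    (hf : ConvexOn ℝ Set.univ f) (hf' : ∀ y, HasGradientAt f (f' y) y)
    (hΨc : ConvexOn ℝ Set.univ Ψ) (hΨlsc : LowerSemicontinuous Ψ)
    (T : E → E)
    (hT : ∀ y x, f y + ⟪f' y, T y - y⟫ + L / 2 * ‖T y - y‖ ^ 2 + Ψ (T y) ≤
      f y + ⟪f' y, x - y⟫ + L / 2 * ‖x - y‖ ^ 2 + Ψ x)
    (xstar : E) (hxstar : ∀ x, f xstar + Ψ xstar ≤ f x + Ψ x)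
    (y : E)
    (hdesc : f (T y) + Ψ (T y) ≤
      f y + ⟪f' y, T y - y⟫ + L / 2 * ‖T y - y‖ ^ 2 + Ψ (T y)) :
    1 / (2 * L) * ‖L • (y - T y)‖ ^ 2 ≤ (f y + Ψ y) - (f (T y) + Ψ (T y)) ∧
    (f y + Ψ y) - (f (T y) + Ψ (T y)) ≤ (f y + Ψ y) - (f xstar + Ψ xstar) := by
  set d := T y - y with hd
  have H : ∀ t : ℝ, 0 < t → t ≤ 1 →
      ⟪f' y, d⟫ + L / 2 * (2 - t) * ‖d‖ ^ 2 + Ψ (T y) ≤ Ψ y := by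
    intro t ht ht1
    have h1t : (0:ℝ) ≤ 1 - t := by linarith
    have hx := hT y ((1 - t) • T y + t • y)
    have hxeq : (1 - t) • T y + t • y - y = (1 - t) • d := by
      rw [hd]; module
    rw [hxeq] at hx
    have hinner : ⟪f' y, (1 - t) • d⟫ = (1 - t) * ⟪f' y, d⟫ :=
      real_inner_smul_right _ _ _
    have hnorm : ‖(1 - t) • d‖ ^ 2 = (1 - t) ^ 2 * ‖d‖ ^ 2 := by
      rw [norm_smul, Real.norm_eq_abs, abs_of_nonneg h1t, mul_pow]
    have hconv := hΨc.2 (Set.mem_univ (T y)) (Set.mem_univ y) h1t ht.le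
      (by ring : (1 - t) + t = 1)
    rw [hinner, hnorm] at hx
    simp only [smul_eq_mul] at hconv
    nlinarith [hx, hconv, ht, sq_nonneg (‖d‖), mul_pos ht ht]
  have key : ⟪f' y, d⟫ + L * ‖d‖ ^ 2 + Ψ (T y) ≤ Ψ y := by
    have K0 : (0:ℝ) ≤ L / 2 * ‖d‖ ^ 2 := by positivity
    have : ⟪f' y, d⟫ + L * ‖d‖ ^ 2 + Ψ (T y) - Ψ y ≤ 0 := by
      apply le_of_forall_pos_le_add
      intro ε hε
      set K := L / 2 * ‖d‖ ^ 2 with hK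
      set t : ℝ := min 1 (ε / (K + 1)) with htdef
      have ht : 0 < t := lt_min one_pos (by positivity)
      have ht1 : t ≤ 1 := min_le_left _ _
      have h := H t ht ht1
      have htK : K * t ≤ ε := by
        have h2 : t ≤ ε / (K + 1) := min_le_right _ _
        have : K * t ≤ K * (ε / (K + 1)) := by
          apply mul_le_mul_of_nonneg_left h2 K0
        calc K * t ≤ K * (ε / (K + 1)) := this
          _ ≤ ε := by
            rw [div_eq_inv_mul, ← mul_assoc]
            have : K * (K + 1)⁻¹ ≤ 1 := by
              rw [mul_inv_le_iff₀ (by linarith)]; linarith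
            nlinarith
      nlinarith [h]
    linarith
  constructor
  · have hneq : ‖L • (y - T y)‖ ^ 2 = L ^ 2 * ‖d‖ ^ 2 := by
      have : y - T y = -d := by rw [hd]; abel
      rw [this, norm_smul, Real.norm_eq_abs, abs_of_pos hL, norm_neg, mul_pow]
    rw [hneq]
    have hLL : 1 / (2 * L) * (L ^ 2 * ‖d‖ ^ 2) = L / 2 * ‖d‖ ^ 2 := by
      field_simp
    rw [hLL]
    linarith [hdesc, key]
  · linarith [hxstar (T y)]
end

section
/- Let φ : E → ℝ ∪ {+∞} be proper, lower-semicontinuous, and convex with nonempty minimizer set X*, satisfying the Hölderian error bound φ(x) - φ* ≥ κ·dist(x, X*)^ρ for all x in the sublevel set {x : φ(x) ≤ φ(x₀)}, with κ > 0 and ρ ≥ 1. Then for every x in this sublevel set with x ∉ X*, and every subgradient g ∈ ∂φ(x), it holds that κ·dist(x, X*)^{ρ-1} ≤ ‖g‖. -/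
open Real RealInnerProductSpace

theorem stmt6 {E : Type*} [NormedAddCommGroup E] [InnerProductSpace ℝ E]
    [FiniteDimensional ℝ E]
    (φ : E → ℝ) (hconv : ConvexOn ℝ Set.univ φ) (hlsc : LowerSemicontinuous φ)
    (Xstar : Set E) (hX : Xstar = {z | ∀ x, φ z ≤ φ x})
    (xm : E) (hxm : xm ∈ Xstar)
    (x₀ : E) (κ ρ : ℝ) (hκ : 0 < κ) (hρ : 1 ≤ ρ)
    (hHEB : ∀ x, φ x ≤ φ x₀ → κ * Metric.infDist x Xstar ^ ρ ≤ φ x - φ xm) :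
    ∀ x, φ x ≤ φ x₀ → x ∉ Xstar → ∀ g : E, (∀ z, φ x + ⟪g, z - x⟫ ≤ φ z) →
      κ * Metric.infDist x Xstar ^ (ρ - 1) ≤ ‖g‖ := by
  intro x hx hxX g hg
  have hclosed : IsClosed Xstar := by
    rw [hX]
    have : {z : E | ∀ y, φ z ≤ φ y} = ⋂ y, {z | φ z ≤ φ y} := by
      ext z; simp
    rw [this]
    exact isClosed_iInter fun y => hlsc.isClosed_preimage (φ y)
  have hne : Xstar.Nonempty := ⟨xm, hxm⟩
  set d := Metric.infDist x Xstar with hd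
  have hdpos : 0 < d := by
    rw [hd]
    exact (hclosed.notMem_iff_infDist_pos hne).1 hxX
  -- nearest point
  obtain ⟨z, hzX, hz⟩ := hclosed.exists_infDist_eq_dist hne x
  have hφz : φ z = φ xm := by
    rw [hX] at hzX hxm
    exact le_antisymm (hzX xm) (hxm z)
  have h1 : κ * d ^ ρ ≤ φ x - φ xm := hHEB x hx
  have h2 : φ x - φ z ≤ ⟪g, x - z⟫ := by
    have := hg z
    have : φ x - φ z ≤ -⟪g, z - x⟫ := by linarith
    rwa [← inner_neg_right, neg_sub] at this
  have h3 : ⟪g, x - z⟫ ≤ ‖g‖ * d := by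
    calc ⟪g, x - z⟫ ≤ ‖g‖ * ‖x - z‖ := real_inner_le_norm g (x - z)
      _ = ‖g‖ * d := by rw [hd, hz, dist_eq_norm]
  have key : κ * d ^ ρ ≤ ‖g‖ * d := by
    rw [hφz] at h2
    linarith
  have hdρ : d ^ ρ = d ^ (ρ - 1) * d := by
    rw [← Real.rpow_add_one hdpos.ne', sub_add_cancel]
  rw [hdρ, ← mul_assoc] at key
  exact le_of_mul_le_mul_right key hdpos
end

section
/- Let φ : E → ℝ ∪ {+∞} be proper, lower-semicontinuous, and convex with nonempty minimizer set X*, satisfying the Hölderian error bound φ(x) - φ* ≥ κ·dist(x, X*)^ρ for all x in the sublevel set {x : φ(x) ≤ φ(x₀)}, with κ > 0 and ρ ≥ 1. Then for every x in this sublevel set with x ∉ X* and every g ∈ ∂φ(x), the Łojasiewicz gradient inequality κ^{1/ρ}·(φ(x) - φ*)^{(ρ-1)/ρ} ≤ ‖g‖ holds. -/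
/-!
Let `f = φ x - φ*` and `d = dist(x, X*)`. Testing the subgradient inequality at points of `X*`
gives `f ≤ ‖g‖ d`, while the error bound gives `κ^{1/ρ} d ≤ f^{1/ρ}`. Multiplying the latter by
`f^{(ρ-1)/ρ}` yields `κ^{1/ρ} f^{(ρ-1)/ρ} d ≤ f ≤ ‖g‖ d`, and `d > 0` because `f > 0`.
-/

open Real RealInnerProductSpace

section Subgradient

variable {E : Type*} [NormedAddCommGroup E] [InnerProductSpace ℝ E]

lemma sub_le_norm_mul_dist_of_subgradient {φ : E → ℝ} {x g : E}
    (hg : ∀ z, φ x + ⟪g, z - x⟫ ≤ φ z) (y : E) : φ x - φ y ≤ ‖g‖ * dist x y := by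
  have hinner : -⟪g, y - x⟫ ≤ ‖g‖ * dist x y := by
    rw [dist_comm, dist_eq_norm]
    exact (neg_le_abs _).trans (abs_real_inner_le_norm g (y - x))
  linarith [hg y]

lemma sub_le_norm_mul_infDist_of_subgradient {φ : E → ℝ} {x g : E}
    (hg : ∀ z, φ x + ⟪g, z - x⟫ ≤ φ z) {s : Set E} (hs : s.Nonempty) {m : ℝ}
    (hm : ∀ y ∈ s, φ y ≤ m) : φ x - m ≤ ‖g‖ * Metric.infDist x s := by
  have hle : ∀ y ∈ s, φ x - m ≤ ‖g‖ * dist x y := fun y hy =>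
    (sub_le_sub_left (hm y hy) _).trans (sub_le_norm_mul_dist_of_subgradient hg y)
  rcases (norm_nonneg g).eq_or_lt with hg0 | hg0
  · obtain ⟨y, hy⟩ := hs
    simpa [← hg0] using hle y hy
  · rw [← div_le_iff₀' hg0, Metric.le_infDist hs]
    exact fun y hy => (div_le_iff₀' hg0).2 (hle y hy)

end Subgradient

lemma rpow_one_div_mul_le_rpow_one_div {κ ρ d f : ℝ} (hκ : 0 ≤ κ) (hρ : 0 < ρ) (hd : 0 ≤ d)
    (h : κ * d ^ ρ ≤ f) : κ ^ (1 / ρ) * d ≤ f ^ (1 / ρ) := by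
  calc κ ^ (1 / ρ) * d = (κ * d ^ ρ) ^ (1 / ρ) := by
        rw [mul_rpow hκ (rpow_nonneg hd ρ), ← rpow_mul hd, mul_one_div_cancel hρ.ne', rpow_one]
    _ ≤ f ^ (1 / ρ) := rpow_le_rpow (by positivity) h (by positivity)

lemma rpow_mul_rpow_le_of_mul_rpow_le_of_le_mul {κ ρ d f G : ℝ} (hκ : 0 ≤ κ) (hρ : 0 < ρ)
    (hf : 0 < f) (hd : 0 ≤ d) (hgrowth : κ * d ^ ρ ≤ f) (hslope : f ≤ G * d) :
    κ ^ (1 / ρ) * f ^ ((ρ - 1) / ρ) ≤ G := by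
  have hd0 : 0 < d := by
    by_contra! hd0
    rw [hd.antisymm' hd0, mul_zero] at hslope
    linarith
  refine le_of_mul_le_mul_right ?_ hd0
  calc κ ^ (1 / ρ) * f ^ ((ρ - 1) / ρ) * d = f ^ ((ρ - 1) / ρ) * (κ ^ (1 / ρ) * d) := by ring
    _ ≤ f ^ ((ρ - 1) / ρ) * f ^ (1 / ρ) := by
        gcongr
        exact rpow_one_div_mul_le_rpow_one_div hκ hρ hd hgrowth
    _ = f := by
        rw [← rpow_add hf, ← add_div, sub_add_cancel, div_self hρ.ne', rpow_one]
    _ ≤ G * d := hslope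

theorem stmt7_general {E : Type*} [NormedAddCommGroup E] [InnerProductSpace ℝ E]
    (φ : E → ℝ)
    (Xstar : Set E) (hX : Xstar = {z | ∀ x, φ z ≤ φ x})
    (xm : E) (hxm : xm ∈ Xstar)
    (x₀ : E) (κ ρ : ℝ) (hκ : 0 < κ) (hρ : 1 ≤ ρ)
    (hHEB : ∀ x, φ x ≤ φ x₀ → κ * Metric.infDist x Xstar ^ ρ ≤ φ x - φ xm) :
    ∀ x, φ x ≤ φ x₀ → x ∉ Xstar → ∀ g : E, (∀ z, φ x + ⟪g, z - x⟫ ≤ φ z) →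
      κ ^ (1 / ρ) * (φ x - φ xm) ^ ((ρ - 1) / ρ) ≤ ‖g‖ := by
  intro x hx hxX g hg
  subst hX
  have hgap : 0 < φ x - φ xm := by
    simp only [Set.mem_ofPred_eq, not_forall, not_le] at hxX
    obtain ⟨y, hy⟩ := hxX
    linarith [hxm y]
  have hslope : φ x - φ xm ≤ ‖g‖ * Metric.infDist x {z | ∀ x, φ z ≤ φ x} :=
    sub_le_norm_mul_infDist_of_subgradient hg ⟨xm, hxm⟩ fun y hy => hy xm
  exact rpow_mul_rpow_le_of_mul_rpow_le_of_le_mul hκ.le (by linarith) hgap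
    Metric.infDist_nonneg (hHEB x hx) hslope

theorem stmt7 {E : Type*} [NormedAddCommGroup E] [InnerProductSpace ℝ E]
    [FiniteDimensional ℝ E]
    (φ : E → ℝ) (hconv : ConvexOn ℝ Set.univ φ) (hlsc : LowerSemicontinuous φ)
    (Xstar : Set E) (hX : Xstar = {z | ∀ x, φ z ≤ φ x})
    (xm : E) (hxm : xm ∈ Xstar)
    (x₀ : E) (κ ρ : ℝ) (hκ : 0 < κ) (hρ : 1 ≤ ρ)
    (hHEB : ∀ x, φ x ≤ φ x₀ → κ * Metric.infDist x Xstar ^ ρ ≤ φ x - φ xm) :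
    ∀ x, φ x ≤ φ x₀ → x ∉ Xstar → ∀ g : E, (∀ z, φ x + ⟪g, z - x⟫ ≤ φ z) →
      κ ^ (1 / ρ) * (φ x - φ xm) ^ ((ρ - 1) / ρ) ≤ ‖g‖ :=
  stmt7_general φ Xstar hX xm hxm x₀ κ ρ hκ hρ hHEB
end

section
/- There is no L-smooth convex function φ : E → ℝ with nonempty minimizer set that satisfies the Hölderian error bound condition φ(x) - φ* ≥ κ·dist(x, X*)^ρ on a sublevel set containing points outside X*, for any exponent ρ ∈ [1, 2) and κ > 0, unless the sublevel set contains no boundary approaching X*. Precisely: if φ is convex with L-Lipschitz gradient, X* = argmin φ ≠ ∅, and φ(x) - φ* ≥ κ·dist(x, X*)^ρ with ρ ∈ [1,2) holds for all x in a neighborhood of some point of X*, then ‖∇φ(x)‖ is bounded below by a positive constant for all non-optimal x in that neighborhood, contradicting continuity of ∇φ at minimizers that are limits of non-optimal points. -/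
/-!
Let `p` be a minimizer nearest to a non-optimal `x`, and `d = ‖x - p‖ > 0`. Convexity gives
`φ x - φ* ≤ ⟪∇φ x, x - p⟫ ≤ ‖∇φ x‖ d`, so the error bound yields `κ d^(ρ-1) ≤ ‖∇φ x‖`, while
`∇φ p = 0` and the Lipschitz bound give `‖∇φ x‖ ≤ L d`. Together `κ/L ≤ d^(2-ρ)`; as `ρ < 2` this
bounds `d` below by `d₀ = (κ/L)^(1/(2-ρ))`, and then `‖∇φ x‖ ≥ κ d₀^(ρ-1)` because `ρ ≥ 1`.
-/

open Real RealInnerProductSpace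

theorem rpow_inv_le_of_mul_rpow_sub_one_le_mul {κ L ρ d : ℝ} (hκ : 0 ≤ κ) (hL : 0 < L)
    (hρ : ρ < 2) (hd : 0 < d) (h : κ * d ^ (ρ - 1) ≤ L * d) : (κ / L) ^ (2 - ρ)⁻¹ ≤ d := by
  have hsplit : d = d ^ (2 - ρ) * d ^ (ρ - 1) := by
    rw [← rpow_add hd]; norm_num
  have hκL : κ / L ≤ d ^ (2 - ρ) := by
    rw [div_le_iff₀ hL]
    refine le_of_mul_le_mul_right ?_ (rpow_pos_of_pos hd (ρ - 1))
    calc κ * d ^ (ρ - 1) ≤ L * d := h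
      _ = L * (d ^ (2 - ρ) * d ^ (ρ - 1)) := by rw [← hsplit]
      _ = d ^ (2 - ρ) * L * d ^ (ρ - 1) := by ring
  exact (rpow_inv_le_iff_of_pos (div_nonneg hκ hL.le) hd.le (by linarith)).2 hκL

section Gradient

variable {E : Type*} [NormedAddCommGroup E] [InnerProductSpace ℝ E] [CompleteSpace E]
  {f : E → ℝ} {g : E} {s : Set E} {x y : E}

theorem IsLocalMin.hasGradientAt_eq_zero (h : IsLocalMin f x) (hg : HasGradientAt f g x) :
    g = 0 :=
  (InnerProductSpace.toDual ℝ E).map_eq_zero_iff.1 (h.hasFDerivAt_eq_zero hg.hasFDerivAt)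

theorem ConvexOn.add_inner_le_of_hasGradientAt (hf : ConvexOn ℝ s f) (hx : x ∈ s) (hy : y ∈ s)
    (hg : HasGradientAt f g x) : f x + ⟪g, y - x⟫ ≤ f y := by
  set ψ : ℝ → ℝ := f ∘ AffineMap.lineMap x y
  have hψ : ConvexOn ℝ (AffineMap.lineMap x y ⁻¹' s) ψ := hf.comp_affineMap _
  have hline : HasDerivAt (AffineMap.lineMap x y : ℝ → E) (y - x) 0 := by
    simpa using AffineMap.hasDerivAt_lineMap (a := x) (b := y) (x := (0 : ℝ))
  have hψ' : HasDerivAt ψ ⟪g, y - x⟫ 0 := by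
    have hg0 : HasFDerivAt f (InnerProductSpace.toDual ℝ E g) (AffineMap.lineMap x y (0 : ℝ)) := by
      simpa using hg.hasFDerivAt
    simpa using hg0.comp_hasDerivAt (0 : ℝ) hline
  have hslope := hψ.le_slope_of_hasDerivAt (by simpa using hx) (by simpa using hy) one_pos hψ'
  simp only [slope_def_field, ψ, Function.comp_apply, AffineMap.lineMap_apply_zero,
    AffineMap.lineMap_apply_one, sub_zero, div_one] at hslope
  linarith

theorem ConvexOn.sub_le_norm_mul_dist_of_hasGradientAt (hf : ConvexOn ℝ s f) (hx : x ∈ s)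
    (hy : y ∈ s) (hg : HasGradientAt f g x) : f x - f y ≤ ‖g‖ * dist x y := by
  have hgrad := hf.add_inner_le_of_hasGradientAt hx hy hg
  have hinner : ⟪g, y - x⟫ = -⟪g, x - y⟫ := by rw [← inner_neg_right, neg_sub]
  calc f x - f y ≤ ⟪g, x - y⟫ := by linarith
    _ ≤ ‖g‖ * ‖x - y‖ := real_inner_le_norm g (x - y)
    _ = ‖g‖ * dist x y := by rw [dist_eq_norm]

theorem ConvexOn.mul_rpow_sub_one_le_norm_of_hasGradientAt {κ ρ : ℝ} (hf : ConvexOn ℝ s f)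
    (hx : x ∈ s) (hy : y ∈ s) (hg : HasGradientAt f g x) (hxy : 0 < dist x y)
    (h : κ * dist x y ^ ρ ≤ f x - f y) : κ * dist x y ^ (ρ - 1) ≤ ‖g‖ := by
  rw [rpow_sub_one hxy.ne', mul_div_assoc', div_le_iff₀ hxy]
  exact h.trans (hf.sub_le_norm_mul_dist_of_hasGradientAt hx hy hg)

end Gradient

theorem stmt8_general {E : Type*} [NormedAddCommGroup E] [InnerProductSpace ℝ E]
    [FiniteDimensional ℝ E]
    (φ : E → ℝ) (φ' : E → E) (L κ ρ : ℝ) (hL : 0 < L) (hκ : 0 < κ)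
    (hρ1 : 1 ≤ ρ) (hρ2 : ρ < 2)
    (hconv : ConvexOn ℝ Set.univ φ) (hgrad : ∀ x, HasGradientAt φ (φ' x) x)
    (hlip : ∀ x y, ‖φ' x - φ' y‖ ≤ L * ‖x - y‖)
    (Xstar : Set E) (hX : Xstar = {z | ∀ x, φ z ≤ φ x})
    (xstar : E) (hxs : xstar ∈ Xstar)
    (U : Set E)
    (hHEB : ∀ x ∈ U, κ * Metric.infDist x Xstar ^ ρ ≤ φ x - φ xstar) :
    ∃ c > 0, ∀ x ∈ U, x ∉ Xstar → c ≤ ‖φ' x‖ := by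
  have hφ : Continuous φ :=
    continuous_iff_continuousAt.2 fun z => (hgrad z).differentiableAt.continuousAt
  have hclosed : IsClosed Xstar := by
    rw [hX, Set.ofPred_forall]
    exact isClosed_iInter fun y => isClosed_le hφ continuous_const
  have hne : Xstar.Nonempty := ⟨xstar, hxs⟩
  set d₀ := (κ / L) ^ (2 - ρ)⁻¹
  refine ⟨κ * d₀ ^ (ρ - 1), by positivity, fun x hxU hx => ?_⟩
  obtain ⟨p, hp, hpx⟩ := hclosed.exists_infDist_eq_dist hne x
  have hd : 0 < dist x p := hpx ▸ (hclosed.notMem_iff_infDist_pos hne).1 hx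
  have hmin : ∀ z ∈ Xstar, ∀ y, φ z ≤ φ y := by rw [hX]; exact fun z hz => hz
  have hφp : φ p = φ xstar := le_antisymm (hmin p hp xstar) (hmin xstar hxs p)
  have hpmin : IsLocalMin φ p := Filter.Eventually.of_forall (hmin p hp)
  have hlow : κ * dist x p ^ (ρ - 1) ≤ ‖φ' x‖ :=
    hconv.mul_rpow_sub_one_le_norm_of_hasGradientAt (Set.mem_univ x) (Set.mem_univ p) (hgrad x) hd
      (by rw [hφp, ← hpx]; exact hHEB x hxU)
  have hup : ‖φ' x‖ ≤ L * dist x p := by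
    simpa [hpmin.hasGradientAt_eq_zero (hgrad p), dist_eq_norm] using hlip x p
  have hd₀ : d₀ ≤ dist x p :=
    rpow_inv_le_of_mul_rpow_sub_one_le_mul hκ.le hL hρ2 hd (hlow.trans hup)
  calc κ * d₀ ^ (ρ - 1) ≤ κ * dist x p ^ (ρ - 1) := by gcongr
    _ ≤ ‖φ' x‖ := hlow

theorem stmt8 {E : Type*} [NormedAddCommGroup E] [InnerProductSpace ℝ E]
    [FiniteDimensional ℝ E]
    (φ : E → ℝ) (φ' : E → E) (L κ ρ : ℝ) (hL : 0 < L) (hκ : 0 < κ)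
    (hρ1 : 1 ≤ ρ) (hρ2 : ρ < 2)
    (hconv : ConvexOn ℝ Set.univ φ) (hgrad : ∀ x, HasGradientAt φ (φ' x) x)
    (hlip : ∀ x y, ‖φ' x - φ' y‖ ≤ L * ‖x - y‖)
    (Xstar : Set E) (hX : Xstar = {z | ∀ x, φ z ≤ φ x})
    (xstar : E) (hxs : xstar ∈ Xstar)
    (U : Set E) (hU : U ∈ nhds xstar)
    (hHEB : ∀ x ∈ U, κ * Metric.infDist x Xstar ^ ρ ≤ φ x - φ xstar) :
    ∃ c > 0, ∀ x ∈ U, x ∉ Xstar → c ≤ ‖φ' x‖ :=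
  stmt8_general φ φ' L κ ρ hL hκ hρ1 hρ2 hconv hgrad hlip Xstar hX xstar hxs U hHEB
end

section
/- Suppose a sequence (A_k) of positive reals satisfies A_k ≥ (2/M)·(1 + √(σ/(2M)))^{2(k-1)} for all k ≥ 1, where M, σ > 0, and suppose for some k ≥ 1 that A_k < 2(M + σ)/(β²σ²) with β ∈ (0,1]. Then k + 1 ≤ 2 + (√(2M/σ) + 1)·log((M + σ)/(βσ)). -/
theorem stmt11 (M σ β : ℝ) (hM : 0 < M) (hσ : 0 < σ) (hβ0 : 0 < β) (hβ1 : β ≤ 1)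
    (A : ℕ → ℝ)
    (hA : ∀ k, 1 ≤ k → (2 / M) * (1 + Real.sqrt (σ / (2 * M))) ^ (2 * (k - 1)) ≤ A k)
    (k : ℕ) (hk : 1 ≤ k) (hAk : A k < 2 * (M + σ) / (β ^ 2 * σ ^ 2)) :
    (k : ℝ) + 1 ≤ 2 + (Real.sqrt (2 * M / σ) + 1) * Real.log ((M + σ) / (β * σ)) := by
  set x := Real.sqrt (σ / (2 * M)) with hxdef
  have hx : 0 < x := Real.sqrt_pos.mpr (by positivity)
  have hx1 : 0 < 1 + x := by linarith
  have hinv : Real.sqrt (2 * M / σ) = x⁻¹ := by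
    rw [hxdef, ← Real.sqrt_inv, inv_div]
  set y := (M + σ) / (β * σ) with hydef
  have hy1 : 1 ≤ y := by
    rw [hydef, le_div_iff₀ (by positivity)]
    nlinarith
  have hy0 : 0 < y := lt_of_lt_of_le one_pos hy1
  set n := k - 1 with hndef
  have h5 : (1 + x) ^ (2 * n) < y ^ 2 := by
    have h2 : (2 / M) * (1 + x) ^ (2 * n) < 2 * (M + σ) / (β ^ 2 * σ ^ 2) :=
      lt_of_le_of_lt (hA k hk) hAk
    have h4 : M * (2 * (M + σ) / (β ^ 2 * σ ^ 2)) / 2 ≤ y ^ 2 := by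
      rw [hydef, div_pow, mul_pow,
        show M * (2 * (M + σ) / (β ^ 2 * σ ^ 2)) / 2 = M * (M + σ) / (β ^ 2 * σ ^ 2) by ring]
      gcongr
      nlinarith
    calc (1 + x) ^ (2 * n) = M * ((2 / M) * (1 + x) ^ (2 * n)) / 2 := by
          field_simp
      _ < M * (2 * (M + σ) / (β ^ 2 * σ ^ 2)) / 2 := by
          gcongr
      _ ≤ y ^ 2 := h4
  have hlogy : 0 ≤ Real.log y := Real.log_nonneg hy1
  have hlog5 : (2 * n : ℝ) * Real.log (1 + x) < 2 * Real.log y := by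
    have h := Real.log_lt_log (by positivity) h5
    rw [Real.log_pow, Real.log_pow] at h
    push_cast at h
    convert h using 1 <;> push_cast <;> ring
  have hlogx : x / (1 + x) ≤ Real.log (1 + x) := by
    have h := Real.log_le_sub_one_of_pos (x := (1 + x)⁻¹) (by positivity)
    rw [Real.log_inv] at h
    have h2 : 1 - (1 + x)⁻¹ = x / (1 + x) := by field_simp; ring
    linarith
  have hn : (n : ℝ) * (x / (1 + x)) < Real.log y := by
    have h1 : (n : ℝ) * (x / (1 + x)) ≤ (n : ℝ) * Real.log (1 + x) :=
      mul_le_mul_of_nonneg_left hlogx (Nat.cast_nonneg n)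
    linarith
  have hnx : (n : ℝ) * x < Real.log y * (1 + x) := by
    rw [mul_div_assoc'] at hn
    exact (div_lt_iff₀ hx1).mp hn
  have hxx : x⁻¹ * x = 1 := inv_mul_cancel₀ hx.ne'
  have hn2 : (n : ℝ) < (x⁻¹ + 1) * Real.log y := by
    nlinarith [hnx, hxx, hx, hlogy]
  have hcast : (n : ℝ) = (k : ℝ) - 1 := by
    rw [hndef, Nat.cast_sub hk]; norm_num
  rw [hinv]
  linarith
end

section
/- Under the assumptions of the regularized accelerated method: if A_k > 0, σ > 0, and x_k satisfies φ_σ(x_k) - φ_σ* ≤ ‖x₀ - x_σ*‖²/(2A_k), where φ_σ(x) = φ(x) + (σ/2)‖x - x₀‖² is σ-strongly convex with minimizer x_σ* and minimum φ_σ*, then ‖x_k - x₀‖ ≤ (1 + 1/√(σ·A_k))·dist(x₀, X*), where X* = argmin φ. -/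
/-!
The regularized function `φ + σ/2 ‖· - x₀‖²` is `σ`-strongly convex, so it grows quadratically
away from its minimizer `xσ`: `σ/2 ‖x - xσ‖² ≤ φσ x - φσ xσ`. Together with the bound on the gap
at `xk` this gives `‖xk - xσ‖ ≤ ‖x₀ - xσ‖ / √(σ Ak)`. Comparing `φσ xσ` with `φσ z` for a
minimizer `z` of `φ` gives `‖xσ - x₀‖ ≤ ‖z - x₀‖`, and the triangle inequality through `xσ`
concludes.
-/

open Filter Topology Set

section

variable {E : Type*} [NormedAddCommGroup E]

section InnerProductSpace

variable [InnerProductSpace ℝ E]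

lemma ConvexOn.strongConvexOn_add_sq_norm_sub {s : Set E} {f : E → ℝ} (hf : ConvexOn ℝ s f)
    (m : ℝ) (x₀ : E) : StrongConvexOn s m fun x ↦ f x + m / 2 * ‖x - x₀‖ ^ 2 := by
  rw [strongConvexOn_iff_convex]
  -- `m/2 ‖x - x₀‖² - m/2 ‖x‖²` is affine in `x`
  refine ((hf.add (((-m) • innerₛₗ ℝ x₀).convexOn hf.1)).add_const (m / 2 * ‖x₀‖ ^ 2)).congr
    fun x _ ↦ ?_
  simp only [Pi.add_apply, LinearMap.smul_apply, innerₛₗ_apply_apply, smul_eq_mul,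
    norm_sub_sq_real x x₀, real_inner_comm x₀ x]
  ring

lemma StrongConvexOn.sq_norm_sub_le_of_isMinOn {s : Set E} {m : ℝ} {f : E → ℝ}
    (hf : StrongConvexOn s m f) {x₀ x : E} (hx₀ : x₀ ∈ s) (hmin : IsMinOn f s x₀) (hx : x ∈ s) :
    m / 2 * ‖x - x₀‖ ^ 2 ≤ f x - f x₀ := by
  have hsegment : ∀ t ∈ Ioo (0 : ℝ) 1, (1 - t) * (m / 2 * ‖x - x₀‖ ^ 2) ≤ f x - f x₀ := by
    intro t ⟨ht0, ht1⟩
    have hab : t + (1 - t) = 1 := add_sub_cancel t 1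
    have hconv := hf.2 hx hx₀ ht0.le (sub_nonneg.2 ht1.le) hab
    have hle : f x₀ ≤ f (t • x + (1 - t) • x₀) :=
      hmin (hf.1 hx hx₀ ht0.le (sub_nonneg.2 ht1.le) hab)
    simp only [smul_eq_mul] at hconv
    nlinarith [mul_pos ht0 ht0]
  have hlim : Tendsto (fun t : ℝ ↦ (1 - t) * (m / 2 * ‖x - x₀‖ ^ 2)) (𝓝[>] 0)
      (𝓝 (m / 2 * ‖x - x₀‖ ^ 2)) := by
    refine tendsto_nhdsWithin_of_tendsto_nhds ?_
    exact Continuous.tendsto' (by fun_prop) 0 _ (by simp)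
  refine le_of_tendsto hlim ?_
  filter_upwards [Ioo_mem_nhdsGT one_pos] with t ht using hsegment t ht

end InnerProductSpace

lemma norm_sub_le_infDist_of_isMinOn_add_sq_norm_sub {φ : E → ℝ} {σ : ℝ} (hσ : 0 < σ)
    {x₀ xσ : E} (hmin : IsMinOn (fun x ↦ φ x + σ / 2 * ‖x - x₀‖ ^ 2) univ xσ) {X : Set E}
    (hne : X.Nonempty) (hX : ∀ z ∈ X, φ z ≤ φ xσ) : ‖xσ - x₀‖ ≤ Metric.infDist x₀ X := by
  refine (Metric.le_infDist hne).2 fun z hz ↦ ?_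
  have hF : φ xσ + σ / 2 * ‖xσ - x₀‖ ^ 2 ≤ φ z + σ / 2 * ‖z - x₀‖ ^ 2 := hmin (mem_univ z)
  have hsq : ‖xσ - x₀‖ ^ 2 ≤ ‖z - x₀‖ ^ 2 := by nlinarith [hX z hz]
  rw [dist_comm, dist_eq_norm]
  exact (pow_le_pow_iff_left₀ (norm_nonneg _) (norm_nonneg _) two_ne_zero).1 hsq

lemma le_div_sqrt_mul_of_mul_sq_le {a b σ A : ℝ} (ha : 0 ≤ a) (hb : 0 ≤ b) (hσ : 0 < σ)
    (hA : 0 < A) (h : σ / 2 * a ^ 2 ≤ b ^ 2 / (2 * A)) : a ≤ b / √(σ * A) := by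
  have hsq : a ^ 2 * (σ * A) ≤ b ^ 2 := by
    have := (le_div_iff₀ (by positivity)).1 h
    linarith
  rw [le_div_iff₀ (by positivity), ← Real.sqrt_sq ha, ← Real.sqrt_mul (sq_nonneg a),
    ← Real.sqrt_sq hb]
  exact Real.sqrt_le_sqrt hsq

end

theorem stmt15_general {E : Type*} [NormedAddCommGroup E] [InnerProductSpace ℝ E]
    (φ : E → ℝ) (hconv : ConvexOn ℝ Set.univ φ)
    (Xstar : Set E) (hX : Xstar = {z | ∀ x, φ z ≤ φ x}) (hne : Xstar.Nonempty)
    (x₀ xσ xk : E) (σ Ak : ℝ) (hσ : 0 < σ) (hAk : 0 < Ak)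
    (hxσ : ∀ x, φ xσ + σ / 2 * ‖xσ - x₀‖ ^ 2 ≤ φ x + σ / 2 * ‖x - x₀‖ ^ 2)
    (hbound : (φ xk + σ / 2 * ‖xk - x₀‖ ^ 2) - (φ xσ + σ / 2 * ‖xσ - x₀‖ ^ 2) ≤
      ‖x₀ - xσ‖ ^ 2 / (2 * Ak)) :
    ‖xk - x₀‖ ≤ (1 + 1 / Real.sqrt (σ * Ak)) * Metric.infDist x₀ Xstar := by
  have hmin : IsMinOn (fun x ↦ φ x + σ / 2 * ‖x - x₀‖ ^ 2) univ xσ := isMinOn_univ_iff.2 hxσ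
  have hgrowth := (hconv.strongConvexOn_add_sq_norm_sub σ x₀).sq_norm_sub_le_of_isMinOn
    (mem_univ xσ) hmin (mem_univ xk)
  have hclose : ‖xk - xσ‖ ≤ ‖x₀ - xσ‖ / √(σ * Ak) :=
    le_div_sqrt_mul_of_mul_sq_le (norm_nonneg _) (norm_nonneg _) hσ hAk (hgrowth.trans hbound)
  rw [norm_sub_rev x₀] at hclose
  have hdist : ‖xσ - x₀‖ ≤ Metric.infDist x₀ Xstar :=
    norm_sub_le_infDist_of_isMinOn_add_sq_norm_sub hσ hmin hne fun z hz ↦ (hX ▸ hz) xσ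
  calc ‖xk - x₀‖ ≤ ‖xk - xσ‖ + ‖xσ - x₀‖ := norm_sub_le_norm_sub_add_norm_sub ..
    _ ≤ ‖xσ - x₀‖ / √(σ * Ak) + ‖xσ - x₀‖ := by gcongr
    _ = (1 + 1 / √(σ * Ak)) * ‖xσ - x₀‖ := by ring
    _ ≤ (1 + 1 / √(σ * Ak)) * Metric.infDist x₀ Xstar := by gcongr

theorem stmt15 {E : Type*} [NormedAddCommGroup E] [InnerProductSpace ℝ E]
    [FiniteDimensional ℝ E]
    (φ : E → ℝ) (hconv : ConvexOn ℝ Set.univ φ) (hlsc : LowerSemicontinuous φ)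
    (Xstar : Set E) (hX : Xstar = {z | ∀ x, φ z ≤ φ x}) (hne : Xstar.Nonempty)
    (x₀ xσ xk : E) (σ Ak : ℝ) (hσ : 0 < σ) (hAk : 0 < Ak)
    (hxσ : ∀ x, φ xσ + σ / 2 * ‖xσ - x₀‖ ^ 2 ≤ φ x + σ / 2 * ‖x - x₀‖ ^ 2)
    (hbound : (φ xk + σ / 2 * ‖xk - x₀‖ ^ 2) - (φ xσ + σ / 2 * ‖xσ - x₀‖ ^ 2) ≤
      ‖x₀ - xσ‖ ^ 2 / (2 * Ak)) :
    ‖xk - x₀‖ ≤ (1 + 1 / Real.sqrt (σ * Ak)) * Metric.infDist x₀ Xstar :=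
  stmt15_general φ hconv Xstar hX hne x₀ xσ xk σ Ak hσ hAk hxσ hbound
end

section
/- Under the same setting, if additionally M > 0 satisfies the descent condition φ_σ(T^σ_{M+σ}(x_k)) ≤ m^σ_{M+σ}(x_k; T^σ_{M+σ}(x_k)), then ‖g_M(x_k)‖ ≤ ‖g^σ_{M+σ}(x_k)‖ + σ‖x_k - x₀‖ ≤ (2·√((M+σ)/A_k) + σ)·dist(x₀, X*). -/
open Real RealInnerProductSpace

lemma strongmin {E : Type*} [NormedAddCommGroup E] [InnerProductSpace ℝ E]
    (g : E → ℝ) (hg : ConvexOn ℝ Set.univ g) (L : ℝ) (hL : 0 < L) (p T : E)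
    (hT : ∀ x : E, g T + L / 2 * ‖T - p‖ ^ 2 ≤ g x + L / 2 * ‖x - p‖ ^ 2) (x : E) :
    g T + L / 2 * ‖T - p‖ ^ 2 + L / 2 * ‖x - T‖ ^ 2 ≤ g x + L / 2 * ‖x - p‖ ^ 2 := by
  have key : ∀ t ∈ Set.Ioo (0:ℝ) 1,
      g T + L / 2 * ‖T - p‖ ^ 2 + L / 2 * (1 - t) * ‖x - T‖ ^ 2
        ≤ g x + L / 2 * ‖x - p‖ ^ 2 := by
    intro t ht
    obtain ⟨ht0, ht1⟩ := ht
    have hy := hT ((1 - t) • T + t • x)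
    have hconv : g ((1 - t) • T + t • x) ≤ (1 - t) * g T + t * g x :=
      hg.2 (Set.mem_univ T) (Set.mem_univ x) (by linarith) (le_of_lt ht0) (by ring)
    have h1 : ((1 - t) • T + t • x) - p = (1 - t) • (T - p) + t • (x - p) := by
      module
    have hgen : ∀ A B : E, ‖(1 - t) • A + t • B‖ ^ 2
        = (1 - t) * ‖A‖ ^ 2 + t * ‖B‖ ^ 2 - t * (1 - t) * ‖B - A‖ ^ 2 := by
      intro A B
      rw [norm_add_sq_real, norm_sub_sq_real, norm_smul, norm_smul,
        real_inner_smul_left, real_inner_smul_right, Real.norm_eq_abs, Real.norm_eq_abs,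
        abs_of_pos ht0, abs_of_pos (by linarith : (0:ℝ) < 1 - t), real_inner_comm]
      ring
    have hxT : (x - p) - (T - p) = x - T := by abel
    have hid : ‖((1 - t) • T + t • x) - p‖ ^ 2
        = (1 - t) * ‖T - p‖ ^ 2 + t * ‖x - p‖ ^ 2 - t * (1 - t) * ‖x - T‖ ^ 2 := by
      rw [h1, hgen, hxT]
    rw [hid] at hy
    nlinarith [mul_pos ht0 (by linarith : (0:ℝ) < 1 - t)]
  have hlim : Filter.Tendsto
      (fun t : ℝ => g T + L / 2 * ‖T - p‖ ^ 2 + L / 2 * (1 - t) * ‖x - T‖ ^ 2)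
      (nhdsWithin (0:ℝ) (Set.Ioi 0))
      (nhds (g T + L / 2 * ‖T - p‖ ^ 2 + L / 2 * ‖x - T‖ ^ 2)) := by
    have hc : Continuous fun t : ℝ =>
        g T + L / 2 * ‖T - p‖ ^ 2 + L / 2 * (1 - t) * ‖x - T‖ ^ 2 := by continuity
    have h := (hc.tendsto 0).mono_left (nhdsWithin_le_nhds (s := Set.Ioi (0:ℝ)))
    simpa using h
  refine le_of_tendsto hlim ?_
  filter_upwards [Ioo_mem_nhdsGT (by norm_num : (0:ℝ) < 1)] with t ht
  exact key t ht

lemma convex_lin_add {E : Type*} [NormedAddCommGroup E] [InnerProductSpace ℝ E]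
    (Ψ : E → ℝ) (hΨc : ConvexOn ℝ Set.univ Ψ) (c q : E) :
    ConvexOn ℝ Set.univ (fun y => ⟪c, y - q⟫ + Ψ y) := by
  have h1 : ConvexOn ℝ Set.univ (fun y : E => ⟪c, y - q⟫) := by
    refine ⟨convex_univ, ?_⟩
    intro a _ b _ ta tb hta htb hab
    have hq : ta • a + tb • b - q = ta • (a - q) + tb • (b - q) := by
      match_scalars <;> linarith
    show ⟪c, ta • a + tb • b - q⟫ ≤ ta • ⟪c, a - q⟫ + tb • ⟪c, b - q⟫
    rw [hq, inner_add_right, real_inner_smul_right, real_inner_smul_right]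
    simp [smul_eq_mul]
  exact h1.add hΨc

set_option maxHeartbeats 1600000 in
theorem stmt16 {E : Type*} [NormedAddCommGroup E] [InnerProductSpace ℝ E]
    [FiniteDimensional ℝ E]
    (f : E → ℝ) (f' : E → E) (Ψ : E → ℝ)
    (hf : ConvexOn ℝ Set.univ f) (hf' : ∀ y, HasGradientAt f (f' y) y)
    (hΨc : ConvexOn ℝ Set.univ Ψ) (hΨlsc : LowerSemicontinuous Ψ)
    (Xstar : Set E) (hX : Xstar = {z | ∀ x, f z + Ψ z ≤ f x + Ψ x})
    (hne : Xstar.Nonempty)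
    (x₀ xk xσ TM Tσ : E) (σ M Ak : ℝ) (hσ : 0 < σ) (hM : 0 < M) (hAk : 0 < Ak)
    (hTM : ∀ x, ⟪f' xk, TM - xk⟫ + M / 2 * ‖TM - xk‖ ^ 2 + Ψ TM ≤
      ⟪f' xk, x - xk⟫ + M / 2 * ‖x - xk‖ ^ 2 + Ψ x)
    (hTσ : ∀ x, ⟪f' xk + σ • (xk - x₀), Tσ - xk⟫ + (M + σ) / 2 * ‖Tσ - xk‖ ^ 2 + Ψ Tσ ≤
      ⟪f' xk + σ • (xk - x₀), x - xk⟫ + (M + σ) / 2 * ‖x - xk‖ ^ 2 + Ψ x)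
    (hdesc : f Tσ + σ / 2 * ‖Tσ - x₀‖ ^ 2 + Ψ Tσ ≤
      f xk + σ / 2 * ‖xk - x₀‖ ^ 2 + ⟪f' xk + σ • (xk - x₀), Tσ - xk⟫ +
        (M + σ) / 2 * ‖Tσ - xk‖ ^ 2 + Ψ Tσ)
    (hxσ : ∀ x, f xσ + Ψ xσ + σ / 2 * ‖xσ - x₀‖ ^ 2 ≤ f x + Ψ x + σ / 2 * ‖x - x₀‖ ^ 2)
    (hbound : (f xk + Ψ xk + σ / 2 * ‖xk - x₀‖ ^ 2) -
        (f xσ + Ψ xσ + σ / 2 * ‖xσ - x₀‖ ^ 2) ≤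
      Metric.infDist x₀ Xstar ^ 2 / (2 * Ak)) :
    ‖M • (xk - TM)‖ ≤ ‖(M + σ) • (xk - Tσ)‖ + σ * ‖xk - x₀‖ ∧
    ‖(M + σ) • (xk - Tσ)‖ + σ * ‖xk - x₀‖ ≤
      (2 * Real.sqrt ((M + σ) / Ak) + σ) * Metric.infDist x₀ Xstar := by
  set D := Metric.infDist x₀ Xstar with hD
  have hD0 : 0 ≤ D := Metric.infDist_nonneg
  have hMσ : 0 < M + σ := by linarith
  set a := f' xk with ha
  set b := f' xk + σ • (xk - x₀) with hb
  -- norm conversions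
  have hn1 : ‖M • (xk - TM)‖ = M * ‖TM - xk‖ := by
    rw [norm_smul, Real.norm_eq_abs, abs_of_pos hM, norm_sub_rev]
  have hn2 : ‖(M + σ) • (xk - Tσ)‖ = (M + σ) * ‖Tσ - xk‖ := by
    rw [norm_smul, Real.norm_eq_abs, abs_of_pos hMσ, norm_sub_rev]
  -- strengthened optimality for TM
  have hA1 := strongmin (fun y => ⟪a, y - xk⟫ + Ψ y) (convex_lin_add Ψ hΨc a xk) M hM xk TM
    (fun x => by beta_reduce; linarith [hTM x]) Tσ
  have hA2 := strongmin (fun y => ⟪b, y - xk⟫ + Ψ y) (convex_lin_add Ψ hΨc b xk) (M + σ) hMσ xk Tσ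
    (fun x => by beta_reduce; linarith [hTσ x]) TM
  beta_reduce at hA1 hA2
  -- part 1
  have hbdiff : ∀ y : E, ⟪b, y⟫ = ⟪a, y⟫ + σ * ⟪xk - x₀, y⟫ := by
    intro y; rw [hb, inner_add_left, real_inner_smul_left]
  have hw : ‖TM - Tσ‖ = ‖Tσ - TM‖ := norm_sub_rev _ _
  have husq : ‖TM - xk‖ ^ 2 = ‖Tσ - xk‖ ^ 2 + 2 * ⟪Tσ - xk, TM - Tσ⟫ + ‖TM - Tσ‖ ^ 2 := by
    rw [show TM - xk = (Tσ - xk) + (TM - Tσ) by abel, norm_add_sq_real]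
  have hkey : M * ‖TM - Tσ‖ ^ 2 ≤ σ * ⟪Tσ - xk, TM - Tσ⟫ + σ * ⟪xk - x₀, TM - Tσ⟫ := by
    have e1 := hbdiff (Tσ - xk)
    have e2 := hbdiff (TM - xk)
    have e3 : ⟪xk - x₀, TM - xk⟫ - ⟪xk - x₀, Tσ - xk⟫ = ⟪xk - x₀, TM - Tσ⟫ := by
      rw [← inner_sub_right]; congr 1; abel
    have hw2 : ‖Tσ - TM‖ ^ 2 = ‖TM - Tσ‖ ^ 2 := by rw [hw]
    have e3' : σ * ⟪xk - x₀, TM - xk⟫ - σ * ⟪xk - x₀, Tσ - xk⟫ = σ * ⟪xk - x₀, TM - Tσ⟫ := by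
      rw [← e3]; ring
    have husq' : σ * ‖TM - xk‖ ^ 2 =
        σ * ‖Tσ - xk‖ ^ 2 + 2 * (σ * ⟪Tσ - xk, TM - Tσ⟫) + σ * ‖TM - Tσ‖ ^ 2 := by
      rw [husq]; ring
    have hw2' : M * ‖Tσ - TM‖ ^ 2 = M * ‖TM - Tσ‖ ^ 2 := by rw [hw2]
    linarith [hA1, hA2, e1, e2, e3', husq, husq', hw2, hw2']
  have hi1 : ⟪Tσ - xk, TM - Tσ⟫ ≤ ‖Tσ - xk‖ * ‖TM - Tσ‖ := real_inner_le_norm _ _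
  have hi2 : ⟪xk - x₀, TM - Tσ⟫ ≤ ‖xk - x₀‖ * ‖TM - Tσ‖ := real_inner_le_norm _ _
  have htri : ‖TM - xk‖ ≤ ‖Tσ - xk‖ + ‖TM - Tσ‖ := by
    calc ‖TM - xk‖ = ‖(Tσ - xk) + (TM - Tσ)‖ := by rw [show TM - xk = (Tσ - xk) + (TM - Tσ) by abel]
    _ ≤ _ := norm_add_le _ _
  have part1 : ‖M • (xk - TM)‖ ≤ ‖(M + σ) • (xk - Tσ)‖ + σ * ‖xk - x₀‖ := by
    rw [hn1, hn2]
    rcases eq_or_lt_of_le (norm_nonneg (TM - Tσ)) with h0 | h0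
    · have hle : ‖TM - xk‖ ≤ ‖Tσ - xk‖ := by rw [← h0] at htri; linarith
      linarith [mul_le_mul_of_nonneg_left hle hM.le,
        mul_nonneg hσ.le (norm_nonneg (Tσ - xk)), mul_nonneg hσ.le (norm_nonneg (xk - x₀))]
    · have hMw : M * ‖TM - Tσ‖ ≤ σ * ‖Tσ - xk‖ + σ * ‖xk - x₀‖ := by
        have h2 : M * ‖TM - Tσ‖ * ‖TM - Tσ‖ ≤ (σ * ‖Tσ - xk‖ + σ * ‖xk - x₀‖) * ‖TM - Tσ‖ := by
          have i1 := mul_le_mul_of_nonneg_left hi1 hσ.le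
          have i2 := mul_le_mul_of_nonneg_left hi2 hσ.le
          nlinarith [hkey]
        exact le_of_mul_le_mul_right h2 h0
      linarith [mul_le_mul_of_nonneg_left htri hM.le]
  refine ⟨part1, ?_⟩
  -- part 2
  have hσmin := strongmin (fun x => f x + Ψ x) (hf.add hΨc) σ hσ x₀ xσ
    (fun x => by beta_reduce; linarith [hxσ x]) xk
  beta_reduce at hσmin
  have h1 : σ / 2 * ‖xk - xσ‖ ^ 2 ≤ D ^ 2 / (2 * Ak) := by linarith
  have hA2' := strongmin (fun y => ⟪b, y - xk⟫ + Ψ y) (convex_lin_add Ψ hΨc b xk) (M + σ) hMσ xk Tσ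
    (fun x => by beta_reduce; linarith [hTσ x]) xk
  beta_reduce at hA2'
  rw [sub_self, inner_zero_right, norm_zero, norm_sub_rev xk Tσ] at hA2'
  -- (M+σ)/2 ‖Tσ - xk‖² ≤ D²/(2Ak)
  have hv2 : (M + σ) / 2 * ‖Tσ - xk‖ ^ 2 ≤ D ^ 2 / (2 * Ak) := by
    have h3 := hxσ Tσ
    linarith [hdesc, hbound, hA2']
  have hxσx₀ : ‖xσ - x₀‖ ≤ D := by
    by_contra hcon
    push_neg at hcon
    obtain ⟨z, hz, hlt⟩ := (Metric.infDist_lt_iff hne).mp hcon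
    have hzmin : f z + Ψ z ≤ f xσ + Ψ xσ := by
      rw [hX] at hz; exact hz xσ
    have h4 := hxσ z
    have h5 : ‖xσ - x₀‖ ^ 2 ≤ ‖z - x₀‖ ^ 2 := by nlinarith
    have h6 : ‖xσ - x₀‖ ≤ ‖z - x₀‖ := by
      nlinarith [norm_nonneg (xσ - x₀), norm_nonneg (z - x₀)]
    rw [dist_eq_norm, norm_sub_rev] at hlt
    linarith
  set s := Real.sqrt ((M + σ) / Ak) with hs
  have hs0 : 0 ≤ s := Real.sqrt_nonneg _
  have hssq : s ^ 2 = (M + σ) / Ak := Real.sq_sqrt (by positivity)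
  have hsAk : s ^ 2 * Ak = M + σ := by rw [hssq]; exact div_mul_cancel₀ _ hAk.ne'
  -- (M+σ)‖v‖ ≤ s * D
  have hnv : (M + σ) * ‖Tσ - xk‖ ≤ s * D := by
    have hv2' := (le_div_iff₀ (by positivity : (0:ℝ) < 2 * Ak)).mp hv2
    have hsq : ((M + σ) * ‖Tσ - xk‖) ^ 2 ≤ (s * D) ^ 2 := by
      have hc : ((M + σ) * ‖Tσ - xk‖) ^ 2 * Ak ≤ (s * D) ^ 2 * Ak := by
        calc ((M + σ) * ‖Tσ - xk‖) ^ 2 * Ak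
            = (M + σ) * ((M + σ) / 2 * ‖Tσ - xk‖ ^ 2 * (2 * Ak)) := by ring
          _ ≤ (M + σ) * D ^ 2 := mul_le_mul_of_nonneg_left hv2' hMσ.le
          _ = (s * D) ^ 2 * Ak := by
              rw [mul_pow, ← hsAk]; ring
      exact le_of_mul_le_mul_right hc hAk
    have hle := Real.sqrt_le_sqrt hsq
    rwa [Real.sqrt_sq (mul_nonneg hMσ.le (norm_nonneg _)),
      Real.sqrt_sq (mul_nonneg hs0 hD0)] at hle
  -- σ‖xk - xσ‖ ≤ √(σ/Ak) * D
  have hs2 : Real.sqrt (σ / Ak) ^ 2 = σ / Ak := Real.sq_sqrt (by positivity)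
  have hs2Ak : Real.sqrt (σ / Ak) ^ 2 * Ak = σ := by rw [hs2]; exact div_mul_cancel₀ _ hAk.ne'
  have hnd : σ * ‖xk - xσ‖ ≤ Real.sqrt (σ / Ak) * D := by
    have h1' := (le_div_iff₀ (by positivity : (0:ℝ) < 2 * Ak)).mp h1
    have hsq : (σ * ‖xk - xσ‖) ^ 2 ≤ (Real.sqrt (σ / Ak) * D) ^ 2 := by
      have hc : (σ * ‖xk - xσ‖) ^ 2 * Ak ≤ (Real.sqrt (σ / Ak) * D) ^ 2 * Ak := by
        calc (σ * ‖xk - xσ‖) ^ 2 * Ak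
            = σ * (σ / 2 * ‖xk - xσ‖ ^ 2 * (2 * Ak)) := by ring
          _ ≤ σ * D ^ 2 := mul_le_mul_of_nonneg_left h1' hσ.le
          _ = (Real.sqrt (σ / Ak) * D) ^ 2 * Ak := by
              rw [mul_pow, hs2, div_mul_eq_mul_div]
              exact (div_mul_cancel₀ _ hAk.ne').symm
      exact le_of_mul_le_mul_right hc hAk
    have hle := Real.sqrt_le_sqrt hsq
    rwa [Real.sqrt_sq (mul_nonneg hσ.le (norm_nonneg _)),
      Real.sqrt_sq (mul_nonneg (Real.sqrt_nonneg _) hD0)] at hle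
  have hss : Real.sqrt (σ / Ak) ≤ s := by
    apply Real.sqrt_le_sqrt
    gcongr
    linarith
  have htr : ‖xk - x₀‖ ≤ ‖xk - xσ‖ + ‖xσ - x₀‖ := by
    calc ‖xk - x₀‖ = ‖(xk - xσ) + (xσ - x₀)‖ := by
          rw [show xk - x₀ = (xk - xσ) + (xσ - x₀) by abel]
      _ ≤ _ := norm_add_le _ _
  have e1 : σ * ‖xk - x₀‖ ≤ σ * ‖xk - xσ‖ + σ * ‖xσ - x₀‖ := by
    have := mul_le_mul_of_nonneg_left htr hσ.le
    linarith
  have e2 : Real.sqrt (σ / Ak) * D ≤ s * D := mul_le_mul_of_nonneg_right hss hD0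
  have e3 : σ * ‖xσ - x₀‖ ≤ σ * D := mul_le_mul_of_nonneg_left hxσx₀ hσ.le
  rw [hn2]
  linarith
end

section
/- Suppose positive reals L_k, M_k, L_{k+1} satisfy M_k = L_k·γ_inc^{n_k - 1} for an integer n_k ≥ 1, and L_{k+1} = max(L_min, M_k/γ_dec) where γ_inc > 1, γ_dec ≥ 1, 0 < L_min ≤ L_f, and additionally for n_k > 1 it holds that M_k/γ_inc ≤ L_f (no early termination condition). If L_k ≤ γ_inc·L_f, then M_k ≤ γ_inc·L_f, L_{k+1} ≤ max(L_min, (γ_inc/γ_dec)·L_f) ≤ γ_inc·L_f, and n_k ≤ 1 + log(γ_dec)/log(γ_inc) + log(L_{k+1}/L_k)/log(γ_inc). -/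
theorem stmt18 (Lk Mk Lk1 Lmin Lf γinc γdec : ℝ) (nk : ℕ)
    (hγinc : 1 < γinc) (hγdec : 1 ≤ γdec) (hLmin : 0 < Lmin) (hLminLf : Lmin ≤ Lf)
    (hLk : 0 < Lk) (hnk : 1 ≤ nk)
    (hMk : Mk = Lk * γinc ^ (nk - 1))
    (hLk1 : Lk1 = max Lmin (Mk / γdec))
    (hterm : 1 < nk → Mk / γinc ≤ Lf)
    (hLkb : Lk ≤ γinc * Lf) :
    Mk ≤ γinc * Lf ∧
    Lk1 ≤ max Lmin (γinc / γdec * Lf) ∧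
    max Lmin (γinc / γdec * Lf) ≤ γinc * Lf ∧
    (nk : ℝ) ≤ 1 + Real.log γdec / Real.log γinc +
      Real.log (Lk1 / Lk) / Real.log γinc := by
  have hγ0 : (0:ℝ) < γinc := lt_trans one_pos hγinc
  have hγd0 : (0:ℝ) < γdec := lt_of_lt_of_le one_pos hγdec
  have hLf : (0:ℝ) < Lf := lt_of_lt_of_le hLmin hLminLf
  have h1 : Mk ≤ γinc * Lf := by
    rcases eq_or_lt_of_le hnk with h | h
    · rw [hMk, ← h]
      simpa using hLkb
    · have := hterm h
      calc Mk = γinc * (Mk / γinc) := by field_simp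
        _ ≤ γinc * Lf := by
          exact mul_le_mul_of_nonneg_left this (le_of_lt hγ0)
  have h2 : Lk1 ≤ max Lmin (γinc / γdec * Lf) := by
    rw [hLk1]
    apply max_le_max le_rfl
    rw [div_mul_eq_mul_div]
    exact div_le_div_of_nonneg_right h1 hγd0.le
  have h3 : max Lmin (γinc / γdec * Lf) ≤ γinc * Lf := by
    apply max_le
    · calc Lmin ≤ Lf := hLminLf
        _ ≤ γinc * Lf := le_mul_of_one_le_left hLf.le hγinc.le
    · rw [div_mul_eq_mul_div]
      exact div_le_self (by positivity) hγdec
  refine ⟨h1, h2, h3, ?_⟩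
  have hLk1pos : 0 < Lk1 := by rw [hLk1]; exact lt_max_of_lt_left hLmin
  have hlog : 0 < Real.log γinc := Real.log_pos hγinc
  have hkey : Lk * γinc ^ (nk - 1) ≤ Lk1 * γdec := by
    rw [← hMk]
    have : Mk / γdec ≤ Lk1 := hLk1 ▸ le_max_right _ _
    calc Mk = Mk / γdec * γdec := by field_simp
      _ ≤ Lk1 * γdec := mul_le_mul_of_nonneg_right this hγd0.le
  have hlogkey : Real.log Lk + (nk - 1 : ℕ) * Real.log γinc ≤ Real.log Lk1 + Real.log γdec := by
    have := Real.log_le_log (by positivity) hkey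
    rwa [Real.log_mul hLk.ne' (by positivity), Real.log_pow, Real.log_mul hLk1pos.ne' hγd0.ne'] at this
  have hcast : ((nk - 1 : ℕ) : ℝ) = (nk : ℝ) - 1 := by
    have := Nat.cast_sub hnk (R := ℝ)
    simpa using this
  rw [Real.log_div hLk1pos.ne' hLk.ne']
  rw [hcast] at hlogkey
  have h4 : (nk:ℝ) ≤ 1 + (Real.log γdec + (Real.log Lk1 - Real.log Lk)) / Real.log γinc := by
    rw [← sub_le_iff_le_add', le_div_iff₀ hlog]
    nlinarith [hlogkey]
  rw [add_div] at h4
  linarith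
end
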